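/- Let n and k be positive integers with 2k ≤ n + 1, and let S_k be any subset of T_k with |S_k| = s_k. For a tree t ∈ T_n let N_k(t) = #{v ∈ t : t(v) ∈ S_k}. Then the total number of unordered pairs of distinct fringe subtree occurrences from S_k within the same tree satisfies Σ_{t ∈ T_n} binom(N_k(t), 2) = ((n−2k+1)/2)·binom(2n−4k+2, n−2k+1)·s_k². -/

import Mathlib

open Filter Finset
open scoped Classical

/-- Ordered binary trees: every node has exactly two or no children. -/
inductive BT : Type
  | leaf : BT
  | node : BT → BT → BT
deriving DecidableEq

namespace BT

/-- The size of a binary tree: its number of leaves. -/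
def size : BT → ℕ
  | leaf => 1
  | node l r => size l + size r

/-- The multiset of all fringe subtrees of a tree (one for every node). -/
def fringe : BT → Multiset BT
  | leaf => {leaf}
  | node l r => node l r ::ₘ (fringe l + fringe r)

/-- The finset of all ordered binary trees with `n` leaves. -/
def treesOfSize : ℕ → Finset BT
  | 0 => ∅
  | 1 => {leaf}
  | n + 2 =>
    (Finset.range (n + 1)).attach.biUnion fun k =>
      ((treesOfSize (k.1 + 1)) ×ˢ (treesOfSize (n + 1 - k.1))).image fun p => node p.1 p.2
  decreasing_by
    · have := Finset.mem_range.mp k.2; omega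
    · omega

/-- Boolean test whether two ordered binary trees are isomorphic as unordered trees. -/
def isoB : BT → BT → Bool
  | leaf, leaf => true
  | leaf, node _ _ => false
  | node _ _, leaf => false
  | node l1 r1, node l2 r2 => (isoB l1 l2 && isoB r1 r2) || (isoB l1 r2 && isoB r1 l2)

/-- An injective encoding of ordered binary trees into the natural numbers. -/
def encode : BT → ℕ
  | leaf => 0
  | node l r => Nat.pair (encode l) (encode r) + 1

/-- The canonical representative of the isomorphism class of a binary tree:
two trees are isomorphic (equal as unordered trees) iff their canonical forms agree. -/
def canon : BT → BT
  | leaf => leaf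
  | node l r =>
    let l' := canon l
    let r' := canon r
    if encode l' ≤ encode r' then node l' r' else node r' l'

/-- Number of isomorphism classes of unordered binary trees represented among
the fringe subtrees of `t`. -/
def isoClasses (t : BT) : ℕ := ((fringe t).toFinset.image canon).card

/-- Number of distinct ordered binary trees occurring among the fringe subtrees of `t`. -/
def numDistinct (t : BT) : ℕ := (fringe t).toFinset.card

/-- The probability of a tree under the binary search tree model. -/
noncomputable def pbst (t : BT) : ℝ :=
  ((fringe t).map fun s => if 1 < size s then (1 : ℝ) / ((size s : ℝ) - 1) else 1).prod

/-- Expectation of `f` under the uniform distribution on trees with `n` leaves. -/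
noncomputable def unifE (n : ℕ) (f : BT → ℝ) : ℝ :=
  (∑ t ∈ treesOfSize n, f t) / (treesOfSize n).card

/-- Probability of an event under the uniform distribution on trees with `n` leaves. -/
noncomputable def unifP (n : ℕ) (p : BT → Prop) : ℝ :=
  ((treesOfSize n).filter p).card / (treesOfSize n).card

/-- Expectation of `f` under the binary search tree distribution on trees with `n` leaves. -/
noncomputable def bstE (n : ℕ) (f : BT → ℝ) : ℝ :=
  ∑ t ∈ treesOfSize n, pbst t * f t

/-- Probability of an event under the binary search tree distribution on trees with `n` leaves. -/
noncomputable def bstP (n : ℕ) (p : BT → Prop) : ℝ :=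
  ∑ t ∈ (treesOfSize n).filter p, pbst t

end BT

/-!
Let `C = ∑ₙ |Tₙ| Xⁿ`; splitting a tree at its root gives `C = X + C²`. If a statistic satisfies
`F (node l r) = F l + F r + φ l r`, splitting at the root likewise gives
`(1 - 2C) · ∑ₜ F t X^|t| = F leaf · X + ∑_{l,r} φ l r X^(|l|+|r|)`, and `1 - 2C` is invertible.
For the number `N` of occurrences of `S ⊆ T_k` the right side is `|S| Xᵏ`; differentiating
`C = X + C²` gives `(1 - 2C) C' = 1`, so `∑ N = |S| Xᵏ C'`. For `N (N - 1)` the right side is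
`2 (∑ N)² = 2 |S|² X²ᵏ C'²` (an occurrence contains no other one, all having `k` leaves), and
differentiating once more gives `(1 - 2C) C'' = 2 C'²`, so `∑ N (N - 1) = |S|² X²ᵏ C''`. Its
coefficients are read off from `|T_{m+1}| = catalan m`.
-/

open PowerSeries

namespace BT

lemma size_pos : ∀ t : BT, 0 < t.size
  | leaf => Nat.one_pos
  | node l _ => Nat.add_pos_left (size_pos l) _

lemma size_le_of_mem_fringe : ∀ {t u : BT}, u ∈ fringe t → u.size ≤ t.size
  | leaf, u, h => by simp_all [fringe]
  | node l r, u, h => by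
    simp only [fringe, Multiset.mem_cons, Multiset.mem_add] at h
    rcases h with rfl | h | h
    · rfl
    · have := size_le_of_mem_fringe h; simp only [size]; omega
    · have := size_le_of_mem_fringe h; simp only [size]; omega

lemma mem_treesOfSize {n : ℕ} {t : BT} : t ∈ treesOfSize n ↔ t.size = n := by
  induction n using Nat.strong_induction_on generalizing t with
  | _ n ih =>
  match n, t with
  | 0, t => simp [treesOfSize, (size_pos t).ne']
  | 1, leaf => simp [treesOfSize, size]
  | 1, node l r =>
    have := size_pos l
    have := size_pos r
    simp only [treesOfSize, mem_singleton, reduceCtorEq, size, false_iff]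
    omega
  | n + 2, leaf => simp [treesOfSize, size]
  | n + 2, node l r =>
    have := size_pos l
    have := size_pos r
    simp only [treesOfSize, mem_biUnion, mem_attach, true_and, Subtype.exists, mem_range,
      mem_image, mem_product, Prod.exists, node.injEq, size]
    constructor
    · rintro ⟨i, hi, _, _, ⟨hl, hr⟩, rfl, rfl⟩
      rw [ih _ (by omega)] at hl hr
      omega
    · intro h
      exact ⟨l.size - 1, by omega, l, r, ⟨(ih _ (by omega)).2 (by omega),
        (ih _ (by omega)).2 (by omega)⟩, rfl, rfl⟩

lemma filter_ne_leaf_treesOfSize (n : ℕ) :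
    (treesOfSize n).filter (· ≠ leaf) = (antidiagonal n).biUnion fun p =>
      (treesOfSize p.1 ×ˢ treesOfSize p.2).image fun q => node q.1 q.2 := by
  ext (_ | ⟨l, r⟩) <;> simp [mem_treesOfSize, size]

theorem sum_treesOfSize {M : Type*} [AddCommMonoid M] (g : BT → M) (n : ℕ) :
    ∑ t ∈ treesOfSize n, g t = (if n = 1 then g leaf else 0) +
      ∑ p ∈ antidiagonal n, ∑ l ∈ treesOfSize p.1, ∑ r ∈ treesOfSize p.2, g (node l r) := by
  rw [← sum_filter_add_sum_filter_not (treesOfSize n) (· = leaf), filter_eq',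
    filter_ne_leaf_treesOfSize, sum_biUnion]
  · congr 1
    · split_ifs <;> simp_all [mem_treesOfSize, size, eq_comm]
    · refine sum_congr rfl fun p _ => ?_
      rw [sum_image (fun _ _ _ _ h => by simpa [Prod.ext_iff] using h), sum_product]
  · rintro p hp q hq hpq
    simp only [Function.onFun, disjoint_left, mem_image, mem_product, mem_treesOfSize,
      Prod.exists]
    rintro _ ⟨l, r, ⟨hl, hr⟩, rfl⟩ ⟨l', r', ⟨hl', hr'⟩, h⟩
    simp only [node.injEq] at h
    obtain ⟨rfl, rfl⟩ := h
    rw [mem_coe, HasAntidiagonal.mem_antidiagonal] at hp hq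
    exact hpq (Prod.ext (hl.symm.trans hl') (by omega))

def occurrences (S : Finset BT) (t : BT) : ℕ := Multiset.countP (· ∈ S) (fringe t)

lemma occurrences_leaf (S : Finset BT) : occurrences S leaf = if leaf ∈ S then 1 else 0 := by
  rw [occurrences, fringe, ← Multiset.cons_zero, Multiset.countP_cons, Multiset.countP_zero,
    zero_add]

lemma occurrences_node (S : Finset BT) (l r : BT) :
    occurrences S (node l r) =
      (if node l r ∈ S then 1 else 0) + occurrences S l + occurrences S r := by
  simp only [occurrences, fringe, Multiset.countP_cons, Multiset.countP_add]
  ring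

lemma occurrences_eq_zero_of_size_lt {S : Finset BT} {k : ℕ} (hS : S ⊆ treesOfSize k) {t : BT}
    (ht : t.size < k) : occurrences S t = 0 :=
  Multiset.countP_eq_zero.2 fun u hu huS => by
    have := mem_treesOfSize.1 (hS huS)
    have := size_le_of_mem_fringe hu
    omega

section CommSemiring

variable {R : Type*} [CommSemiring R]

noncomputable def genFun (g : BT → R) : R⟦X⟧ :=
  mk fun n => ∑ t ∈ treesOfSize n, g t

noncomputable def nodeSeries (φ : BT → BT → R) : R⟦X⟧ :=
  mk fun n => ∑ p ∈ antidiagonal n, ∑ l ∈ treesOfSize p.1, ∑ r ∈ treesOfSize p.2, φ l r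

lemma genFun_eq_C_mul_X_add_nodeSeries (g : BT → R) :
    genFun g = C (g leaf) * X + nodeSeries fun l r => g (node l r) := by
  ext n
  rw [genFun, coeff_mk, sum_treesOfSize, map_add, coeff_C_mul, coeff_X, nodeSeries, coeff_mk]
  split_ifs <;> simp

lemma genFun_mul (f h : BT → R) :
    genFun f * genFun h = nodeSeries fun l r => f l * h r := by
  ext n
  simp only [genFun, nodeSeries, coeff_mul, coeff_mk, sum_mul_sum]

lemma nodeSeries_add (φ ψ : BT → BT → R) :
    (nodeSeries fun l r => φ l r + ψ l r) = nodeSeries φ + nodeSeries ψ := by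
  ext n
  simp only [nodeSeries, coeff_mk, map_add, sum_add_distrib]

variable (R) in
noncomputable def catalanSeries : R⟦X⟧ := genFun fun _ => 1

lemma catalanSeries_eq_X_add_sq : catalanSeries R = X + catalanSeries R ^ 2 := by
  rw [catalanSeries, sq, genFun_mul, genFun_eq_C_mul_X_add_nodeSeries]
  simp

lemma constantCoeff_catalanSeries : constantCoeff (catalanSeries R) = 0 := by
  simp [catalanSeries, genFun, ← coeff_zero_eq_constantCoeff_apply, treesOfSize]

lemma coeff_zero_catalanSeries : coeff 0 (catalanSeries R) = 0 := by
  rw [coeff_zero_eq_constantCoeff_apply, constantCoeff_catalanSeries]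

lemma coeff_succ_catalanSeries (n : ℕ) : coeff (n + 1) (catalanSeries R) = catalan n := by
  induction n using Nat.strong_induction_on with
  | _ n ih =>
  rw [catalanSeries_eq_X_add_sq, map_add, coeff_X, sq, coeff_mul, Nat.sum_antidiagonal_succ,
    coeff_zero_catalanSeries, zero_mul, zero_add]
  cases n with
  | zero => simp [coeff_zero_catalanSeries]
  | succ m =>
    rw [if_neg (by omega), zero_add, Nat.sum_antidiagonal_succ', coeff_zero_catalanSeries,
      mul_zero, zero_add, catalan_succ', Nat.cast_sum]
    refine sum_congr rfl fun p hp => ?_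
    rw [HasAntidiagonal.mem_antidiagonal] at hp
    rw [ih p.1 (by omega), ih p.2 (by omega), Nat.cast_mul]

lemma coeff_derivative_derivative_catalanSeries (m : ℕ) :
    coeff m (d⁄dX R (d⁄dX R (catalanSeries R))) = (m + 1) * (m + 1).centralBinom := by
  rw [coeff_derivative, coeff_derivative, coeff_succ_catalanSeries,
    ← succ_mul_catalan_eq_centralBinom]
  push_cast
  ring

lemma genFun_indicator {S : Finset BT} {k : ℕ} (hS : S ⊆ treesOfSize k) :
    genFun (fun t => if t ∈ S then (1 : R) else 0) = C (S.card : R) * X ^ k := by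
  ext n
  rw [genFun, coeff_mk, sum_boole, coeff_C_mul_X_pow]
  split_ifs with h
  · rw [h, filter_mem_eq_inter, inter_eq_right.2 hS]
  · rw [filter_false_of_mem fun t ht htS => h ?_, card_empty, Nat.cast_zero]
    rw [← mem_treesOfSize.1 ht, mem_treesOfSize.1 (hS htS)]

end CommSemiring

section CommRing

variable {R : Type*} [CommRing R]

lemma isUnit_one_sub_two_mul_catalanSeries : IsUnit (1 - 2 * catalanSeries R) := by
  simp [isUnit_iff_constantCoeff, constantCoeff_catalanSeries]

lemma one_sub_two_mul_catalanSeries_mul_derivative :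
    (1 - 2 * catalanSeries R) * d⁄dX R (catalanSeries R) = 1 := by
  have h := congrArg (d⁄dX R) (catalanSeries_eq_X_add_sq (R := R))
  rw [map_add, derivative_X, derivative_pow] at h
  norm_num at h
  linear_combination h

lemma one_sub_two_mul_catalanSeries_mul_derivative_derivative :
    (1 - 2 * catalanSeries R) * d⁄dX R (d⁄dX R (catalanSeries R)) =
      2 * d⁄dX R (catalanSeries R) ^ 2 := by
  have h := congrArg (d⁄dX R) (one_sub_two_mul_catalanSeries_mul_derivative (R := R))
  rw [Derivation.leibniz, derivative_one, two_mul, map_sub, map_add, derivative_one] at h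
  simp only [smul_eq_mul] at h
  linear_combination h

theorem one_sub_two_mul_catalanSeries_mul_genFun {F : BT → R} {a : R} {φ : BT → BT → R}
    (hleaf : F leaf = a) (hnode : ∀ l r, F (node l r) = F l + F r + φ l r) :
    (1 - 2 * catalanSeries R) * genFun F = C a * X + nodeSeries φ := by
  have hF : genFun F = C a * X + genFun F * catalanSeries R + catalanSeries R * genFun F +
      nodeSeries φ := by
    rw [catalanSeries, genFun_mul, genFun_mul, genFun_eq_C_mul_X_add_nodeSeries F, hleaf]
    simp only [add_assoc, ← nodeSeries_add, hnode, mul_one, one_mul]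
  linear_combination hF

variable {S : Finset BT} {k : ℕ}

lemma genFun_occurrences (hS : S ⊆ treesOfSize k) :
    genFun (fun t => (occurrences S t : R)) =
      C (S.card : R) * X ^ k * d⁄dX R (catalanSeries R) := by
  apply (isUnit_one_sub_two_mul_catalanSeries (R := R)).mul_left_cancel
  have hocc := one_sub_two_mul_catalanSeries_mul_genFun (F := fun t => (occurrences S t : R))
    (a := if leaf ∈ S then 1 else 0) (φ := fun l r => if node l r ∈ S then 1 else 0)
    (by simp [occurrences_leaf]) fun l r => by rw [occurrences_node]; push_cast; ring
  rw [hocc, ← genFun_eq_C_mul_X_add_nodeSeries (fun t => if t ∈ S then (1 : R) else 0),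
    genFun_indicator hS]
  linear_combination (-(C (S.card : R) * X ^ k)) *
    one_sub_two_mul_catalanSeries_mul_derivative (R := R)

lemma genFun_occurrencePairs (hS : S ⊆ treesOfSize k) :
    genFun (fun t => (occurrences S t : R) * (occurrences S t - 1)) =
      C (S.card : R) ^ 2 * X ^ (2 * k) * d⁄dX R (d⁄dX R (catalanSeries R)) := by
  apply (isUnit_one_sub_two_mul_catalanSeries (R := R)).mul_left_cancel
  have hleaf : (occurrences S leaf : R) * (occurrences S leaf - 1) = 0 := by
    rw [occurrences_leaf]; split_ifs <;> simp
  have hnode (l r : BT) :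
      (occurrences S (node l r) : R) * (occurrences S (node l r) - 1) =
        occurrences S l * (occurrences S l - 1) + occurrences S r * (occurrences S r - 1) +
          (occurrences S l * occurrences S r + occurrences S l * occurrences S r) := by
    by_cases h : node l r ∈ S
    · have hsize := mem_treesOfSize.1 (hS h)
      have := size_pos l
      have := size_pos r
      simp only [size] at hsize
      rw [occurrences_node, if_pos h, occurrences_eq_zero_of_size_lt hS (by omega),
        occurrences_eq_zero_of_size_lt hS (t := r) (by omega)]
      simp
    · rw [occurrences_node, if_neg h]
      push_cast
      ring
  rw [one_sub_two_mul_catalanSeries_mul_genFun hleaf hnode, nodeSeries_add, ← genFun_mul,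
    genFun_occurrences hS, map_zero, zero_mul, zero_add]
  linear_combination (-(C (S.card : R) ^ 2 * X ^ (2 * k))) *
    one_sub_two_mul_catalanSeries_mul_derivative_derivative (R := R)

end CommRing

end BT

open BT in
theorem total_pairs_of_fringe_occurrences_uniform_general
    (n k : ℕ) (hkn : 2 * k ≤ n + 1)
    (S : Finset BT) (hS : S ⊆ treesOfSize k) :
    2 * ∑ t ∈ treesOfSize n, Nat.choose (Multiset.countP (· ∈ S) (fringe t)) 2
      = (n + 1 - 2 * k) * Nat.choose (2 * n + 2 - 4 * k) (n + 1 - 2 * k) * S.card ^ 2 := by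
  change 2 * ∑ t ∈ treesOfSize n, (occurrences S t).choose 2 = _
  obtain ⟨j, hj⟩ := Nat.exists_eq_add_of_le hkn
  have hcoeff := congrArg (coeff n) (genFun_occurrencePairs (R := ℚ) hS)
  rw [genFun, coeff_mk, mul_assoc, ← map_pow, coeff_C_mul, coeff_X_pow_mul'] at hcoeff
  rw [show n + 1 - 2 * k = j by omega, show 2 * n + 2 - 4 * k = 2 * j by omega,
    ← Nat.centralBinom_eq_two_mul_choose]
  apply Nat.cast_injective (R := ℚ)
  push_cast [Nat.cast_choose_two, mul_sum, mul_div_cancel₀ _ (two_ne_zero' ℚ)]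
  rw [hcoeff]
  cases j with
  | zero => simp [show ¬2 * k ≤ n by omega]
  | succ m =>
    rw [if_pos (by omega), show n - 2 * k = m by omega, coeff_derivative_derivative_catalanSeries]
    push_cast
    ring

open BT in
/-- For positive integers `n, k` with `2k ≤ n + 1` and any `S_k ⊆ T_k` with
`|S_k| = s_k`, writing `N_k(t) = #{v ∈ t : t(v) ∈ S_k}`, we have
`Σ_{t ∈ T_n} binom(N_k(t), 2) = ((n−2k+1)/2)·binom(2n−4k+2, n−2k+1)·s_k²`
(stated with both sides multiplied by `2` to avoid division in `ℕ`). -/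
theorem total_pairs_of_fringe_occurrences_uniform
    (n k : ℕ) (hn : 0 < n) (hk : 0 < k) (hkn : 2 * k ≤ n + 1)
    (S : Finset BT) (hS : S ⊆ treesOfSize k) :
    2 * ∑ t ∈ treesOfSize n, Nat.choose (Multiset.countP (· ∈ S) (fringe t)) 2
      = (n + 1 - 2 * k) * Nat.choose (2 * n + 2 - 4 * k) (n + 1 - 2 * k) * S.card ^ 2 :=
  total_pairs_of_fringe_occurrences_uniform_general n k hkn S hS
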